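/- Let q, p be positive integers and β₁ > β₂ > ⋯ > β_g positive integers with the gcd chain e₀ = q, e_i = gcd(e_{i-1}, β_i), e_g = 1, arising as a dual Puiseux characteristic. If for every i = 1, …, g one has e_{i-1} ≡ e_i (mod β_i) or e_{i-1} ≡ -e_i (mod β_i), then the characteristic (q,p;β₁,…,β_g) can be reduced to a rank-one datum (1, β_g; ) by a finite sequence of the following moves on characteristics: (q,p;β₁,…) ↦ (q,β₁;β₁,…) [addition]; for p < q: (q,p;β₁,β₂,…,β_g) ↦ (q-p, β₁; β₂,…,β_g) if (q-p) | β₁, else ↦ (q-p, β₁; β₁,…,β_g) [F^{(∞,0)}]; for p > q with p = β₁ and (p-q) | β₁: (q,p;β₁,…,β_g) ↦ (p-q, β₁; β₂,…,β_g), else ↦ (p-q, p; β₁,…,β_g) [F^{(∞,∞)}]. -/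

import Mathlib

/-- A dual Puiseux characteristic `(q, p; β₁, …, β_g)`, recorded as the pole data `q`, `p`
together with the list `βs = [β₁, …, β_g]` of characteristic exponents. -/
structure DChar where
  q : ℕ
  p : ℕ
  βs : List ℕ
deriving DecidableEq

/-- The combinatorial moves on dual Puiseux characteristics induced by additions and by
the local Fourier transforms `F^{(∞,0)}` and `F^{(∞,∞)}` (Proposition `fourierpuiseux`). -/
inductive FourierMove : DChar → DChar → Prop
  /-- addition: `(q,p;β₁,…) ↦ (q,β₁;β₁,…)`. -/
  | addition (q p b : ℕ) (t : List ℕ) :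
      FourierMove ⟨q, p, b :: t⟩ ⟨q, b, b :: t⟩
  /-- `F^{(∞,0)}` for `p < q` with `(q-p) ∣ β₁`: `(q,p;β₁,β₂,…,β_g) ↦ (q-p,β₁;β₂,…,β_g)`. -/
  | finfZero_div (q p b : ℕ) (t : List ℕ) (h : p < q) (hd : (q - p) ∣ b) :
      FourierMove ⟨q, p, b :: t⟩ ⟨q - p, b, t⟩
  /-- `F^{(∞,0)}` for `p < q` with `(q-p) ∤ β₁`: `(q,p;β₁,…,β_g) ↦ (q-p,β₁;β₁,…,β_g)`. -/
  | finfZero_ndiv (q p b : ℕ) (t : List ℕ) (h : p < q) (hd : ¬ (q - p) ∣ b) :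
      FourierMove ⟨q, p, b :: t⟩ ⟨q - p, b, b :: t⟩
  /-- `F^{(∞,∞)}` for `p > q`, `p = β₁`, `(p-q) ∣ β₁`: `(q,p;β₁,β₂,…) ↦ (p-q,β₁;β₂,…)`. -/
  | finfInf_div (q p b : ℕ) (t : List ℕ) (h : q < p) (hb : p = b) (hd : (p - q) ∣ b) :
      FourierMove ⟨q, p, b :: t⟩ ⟨p - q, b, t⟩
  /-- `F^{(∞,∞)}` for `p > q`, otherwise: `(q,p;β₁,…,β_g) ↦ (p-q,p;β₁,…,β_g)`. -/
  | finfInf_ndiv (q p b : ℕ) (t : List ℕ) (h : q < p) (hnd : ¬ (p = b ∧ (p - q) ∣ b)) :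
      FourierMove ⟨q, p, b :: t⟩ ⟨p - q, p, b :: t⟩

/-- `ValidChain q βs` : the gcd chain `e₀ = q`, `e_i = gcd(e_{i-1}, β_i)` satisfies
`e_{i-1} ∤ β_i` at every step and terminates with `e_g = 1`
(so that `(q, p; βs)` is a genuine dual Puiseux characteristic). -/
def ValidChain : ℕ → List ℕ → Prop
  | q, [] => q = 1
  | q, b :: t => ¬ q ∣ b ∧ ValidChain (Nat.gcd q b) t

/-- `CongCond q βs` : the congruence condition `e_{i-1} ≡ ±e_i (mod β_i)` for all `i`,
along the gcd chain `e₀ = q`, `e_i = gcd(e_{i-1}, β_i)`. -/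
def CongCond : ℕ → List ℕ → Prop
  | _, [] => True
  | q, b :: t =>
      ((q : ℤ) ≡ (Nat.gcd q b : ℤ) [ZMOD (b : ℤ)] ∨
        (q : ℤ) ≡ -(Nat.gcd q b : ℤ) [ZMOD (b : ℤ)]) ∧
      CongCond (Nat.gcd q b) t

/-! Each exponent `β` is removed by one block of moves: an addition sets `p = β`, then
`F^{(∞,0)}` runs the subtractive Euclidean algorithm on `(e, β)` while `e > β`. Once `e < β`,
the congruence `e ≡ ±gcd(e, β) (mod β)` forces `e = gcd(e, β)` or `β - e = gcd(e, β)`, and one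
or two `F^{(∞,∞)}` moves reach `(gcd(e, β), β; …)` with `β` dropped. Induction on the number
of exponents finishes, the gcd chain ending at `e_g = 1`. -/

lemma dvd_or_sub_dvd_of_modEq_pm_gcd {x b : ℕ} (hxb : x < b)
    (hc : (x : ℤ) ≡ (Nat.gcd x b : ℤ) [ZMOD (b : ℤ)] ∨
      (x : ℤ) ≡ -(Nat.gcd x b : ℤ) [ZMOD (b : ℤ)]) :
    x ∣ b ∨ (b - x) ∣ b := by
  rcases Nat.eq_zero_or_pos x with rfl | hx
  · simp
  have hGpos : 0 < Nat.gcd x b := Nat.gcd_pos_of_pos_left b hx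
  have hGx : Nat.gcd x b ≤ x := Nat.le_of_dvd hx (Nat.gcd_dvd_left x b)
  rcases hc with h | h
  · have hxG : x = Nat.gcd x b :=
      (Int.natCast_modEq_iff.mp h).eq_of_lt_of_lt hxb (by omega)
    exact .inl (hxG ▸ Nat.gcd_dvd_right x b)
  · have hsum : ((x + Nat.gcd x b : ℕ) : ℤ) ≡ (0 : ℕ) [ZMOD (b : ℤ)] := by
      simpa using h.add_right (Nat.gcd x b : ℤ)
    have hxG : x + Nat.gcd x b = b :=
      Nat.eq_of_dvd_of_lt_two_mul (by omega)
        ((Nat.modEq_zero_iff_dvd).mp (Int.natCast_modEq_iff.mp hsum)) (by omega)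
    exact .inr (show b - x = Nat.gcd x b by omega ▸ Nat.gcd_dvd_right x b)

namespace FourierMove

lemma reaches_gcd_of_lt {x b : ℕ} (t : List ℕ) (hxb : x < b)
    (hc : (x : ℤ) ≡ (Nat.gcd x b : ℤ) [ZMOD (b : ℤ)] ∨
      (x : ℤ) ≡ -(Nat.gcd x b : ℤ) [ZMOD (b : ℤ)]) :
    Relation.ReflTransGen FourierMove ⟨x, b, b :: t⟩ ⟨Nat.gcd x b, b, t⟩ := by
  by_cases hbx : (b - x) ∣ b
  · have move := finfInf_div x b b t hxb rfl hbx
    rw [← Nat.gcd_eq_left hbx, Nat.gcd_self_sub_left hxb.le] at move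
    exact .single move
  · have hx : x ∣ b := (dvd_or_sub_dvd_of_modEq_pm_gcd hxb hc).resolve_right hbx
    have hx0 : x ≠ 0 := by rintro rfl; simp at hbx
    -- `x = gcd(x, b)`: pass through `b - x` and come back to `x`, now dropping `b`
    have move₁ := finfInf_ndiv x b b t hxb (fun h => hbx h.2)
    have move₂ := finfInf_div (b - x) b b t (by omega) rfl
      (by rwa [Nat.sub_sub_self hxb.le])
    rw [Nat.sub_sub_self hxb.le] at move₂
    rw [Nat.gcd_eq_left hx]
    exact .head move₁ (.single move₂)

lemma reaches_gcd {x b : ℕ} (t : List ℕ) (hxb : x ≠ b)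
    (hc : (x : ℤ) ≡ (Nat.gcd x b : ℤ) [ZMOD (b : ℤ)] ∨
      (x : ℤ) ≡ -(Nat.gcd x b : ℤ) [ZMOD (b : ℤ)]) :
    Relation.ReflTransGen FourierMove ⟨x, b, b :: t⟩ ⟨Nat.gcd x b, b, t⟩ := by
  induction x using Nat.strong_induction_on with
  | _ x ih =>
  rcases Nat.lt_or_gt_of_ne hxb with hlt | hgt
  · exact reaches_gcd_of_lt t hlt hc
  have hgcd : Nat.gcd (x - b) b = Nat.gcd x b := Nat.gcd_sub_self_left hgt.le
  by_cases hdvd : (x - b) ∣ b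
  · have move := finfZero_div x b b t hgt hdvd
    rw [← Nat.gcd_eq_left hdvd, hgcd] at move
    exact .single move
  · have hmod : ((x - b : ℕ) : ℤ) ≡ x [ZMOD (b : ℤ)] := by
      rw [Int.ModEq, Nat.cast_sub hgt.le, Int.sub_emod_right]
    have hne : x - b ≠ b := fun h => hdvd (by rw [h])
    have hb : b ≠ 0 := by rintro rfl; exact hdvd (dvd_zero _)
    have rest := ih (x - b) (by omega) hne (hgcd ▸ hc.imp hmod.trans hmod.trans)
    rw [hgcd] at rest
    exact .head (finfZero_ndiv x b b t hgt hdvd) rest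

end FourierMove

theorem reduction_of_congruences_general (q p : ℕ) (βs : List ℕ)
    (hvalid : ValidChain q βs)
    (hcong : CongCond q βs) :
    Relation.ReflTransGen FourierMove ⟨q, p, βs⟩ ⟨1, βs.getLastD p, []⟩ := by
  induction βs generalizing q p with
  | nil =>
    obtain rfl : q = 1 := hvalid
    exact .refl
  | cons b t ih =>
    obtain ⟨hndvd, hvalid⟩ := hvalid
    obtain ⟨hc, hcong⟩ := hcong
    have hqb : q ≠ b := by rintro rfl; exact hndvd dvd_rfl
    rw [List.getLastD_cons]
    exact .head (.addition q p b t)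
      ((FourierMove.reaches_gcd t hqb hc).trans (ih _ b hvalid hcong))

/-- 'if' direction of the main theorem.  If a dual Puiseux
characteristic `(q, p; β₁, …, β_g)` (with `q, p > 0`, strictly decreasing positive
exponents, valid gcd chain ending at `1`) satisfies `e_{i-1} ≡ ±e_i (mod β_i)` for all
`i`, then it can be reduced to the rank-one characteristic `(1, β_g; )` by a finite
sequence of additions and local Fourier transform moves. -/
theorem reduction_of_congruences (q p : ℕ) (βs : List ℕ)
    (hq : 0 < q) (hp : 0 < p)
    (hpos : ∀ b ∈ βs, 0 < b)
    (hdec : βs.Chain' (· > ·))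
    (hvalid : ValidChain q βs)
    (hcong : CongCond q βs) :
    Relation.ReflTransGen FourierMove ⟨q, p, βs⟩ ⟨1, βs.getLastD p, []⟩ :=
  reduction_of_congruences_general q p βs hvalid hcong
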